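/- Let k be a real closed field with k̄ = k(i) and conj the nontrivial k-automorphism of k̄. A 2×2 matrix M over k̄ satisfies M = A₂·conj(M)·A₂⁻¹, where A₂ = [[0,1],[-1,0]], if and only if M is in the image of the standard embedding μ of the quaternion algebra H over k into M₂(k̄). -/

import Mathlib

open Polynomial Matrix

/-- A (linearly ordered) field is real closed if every nonnegative element is a square and
every polynomial of odd degree has a root. -/
def IsRealClosedOld (k : Type*) [Field k] [LinearOrder k] [IsStrictOrderedRing k] : Prop :=
  (∀ x : k, 0 ≤ x → ∃ y, y ^ 2 = x) ∧
  ∀ p : Polynomial k, Odd p.natDegree → ∃ x, p.eval x = 0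

/-- The algebraic closure k̄ = k(i) of a real closed field `k`. -/
noncomputable abbrev Kbar (k : Type*) [Field k] [LinearOrder k] [IsStrictOrderedRing k] : Type _ :=
  AdjoinRoot (X ^ 2 + 1 : k[X])

/-- The nontrivial `k`-automorphism (conjugation) of `k(i)`, sending `i ↦ -i`. -/
noncomputable def Kbar.conj (k : Type*) [Field k] [LinearOrder k] [IsStrictOrderedRing k] : Kbar k →+* Kbar k :=
  AdjoinRoot.lift (algebraMap k (Kbar k)) (-(AdjoinRoot.root _)) (by
    have h := AdjoinRoot.eval₂_root (X ^ 2 + 1 : k[X])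
    rw [AdjoinRoot.algebraMap_eq]
    simp only [eval₂_add, eval₂_pow, eval₂_X, eval₂_one, neg_sq] at h ⊢
    exact h)

/-- `I_p = diag(1,…,1,-1,…,-1)` with `p` ones. -/
def Ip (R : Type*) [Ring R] (n p : ℕ) : Matrix (Fin n) (Fin n) R :=
  Matrix.diagonal fun j => if (j : ℕ) < p then 1 else -1

/-- `J_p = diag(1,…,1,i,…,i)` with `p` ones. -/
noncomputable def Jp (k : Type*) [Field k] [LinearOrder k] [IsStrictOrderedRing k] (n p : ℕ) :
    Matrix (Fin n) (Fin n) (Kbar k) :=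
  Matrix.diagonal fun j => if (j : ℕ) < p then 1 else AdjoinRoot.root _

/-- The block-diagonal matrix with 2×2 blocks [[0,1],[-1,0]] (0-indexed version of `A_n`). -/
def An (R : Type*) [Ring R] (n : ℕ) : Matrix (Fin n) (Fin n) R :=
  Matrix.of fun i j =>
    if (i : ℕ) % 2 = 0 ∧ (j : ℕ) = (i : ℕ) + 1 then 1
    else if (i : ℕ) % 2 = 1 ∧ (j : ℕ) + 1 = (i : ℕ) then -1 else 0

/-- The standard embedding `μ : H → M₂(k̄)`,
`a + bI + cJ + dK ↦ [[a+bi, c+di],[-c+di, a-bi]]`. -/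
noncomputable def mu (k : Type*) [Field k] [LinearOrder k] [IsStrictOrderedRing k] (h : Quaternion k) :
    Matrix (Fin 2) (Fin 2) (Kbar k) :=
  !![algebraMap k (Kbar k) h.re + algebraMap k (Kbar k) h.imI * AdjoinRoot.root _,
     algebraMap k (Kbar k) h.imJ + algebraMap k (Kbar k) h.imK * AdjoinRoot.root _;
     -algebraMap k (Kbar k) h.imJ + algebraMap k (Kbar k) h.imK * AdjoinRoot.root _,
     algebraMap k (Kbar k) h.re - algebraMap k (Kbar k) h.imI * AdjoinRoot.root _]

/-!
For `M = [[x, y], [z, w]]` one has `A₂ · conj M · A₂⁻¹ = [[conj w, -conj z], [-conj y, conj x]]`,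
so `M` is fixed iff `z = -conj y` and `w = conj x`. Every element of `k(i)` is `α + βi` with
`α, β ∈ k`; writing `x = a + bi` and `y = c + di` then exhibits `M = μ(a + bI + cJ + dK)`.
-/

theorem AdjoinRoot.exists_eq_algebraMap_add_algebraMap_mul_root {k : Type*} [CommRing k]
    [Nontrivial k] (z : AdjoinRoot (X ^ 2 + 1 : k[X])) :
    ∃ a b : k, z = algebraMap k _ a + algebraMap k _ b * AdjoinRoot.root _ := by
  have hmonic : (X ^ 2 + 1 : k[X]).Monic := by simpa using monic_X_pow_add_C (1 : k) two_ne_zero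
  have hdeg : (X ^ 2 + 1 : k[X]).natDegree = 2 := by
    simpa using natDegree_X_pow_add_C (n := 2) (r := (1 : k))
  obtain ⟨p, rfl⟩ := AdjoinRoot.mk_surjective z
  have hr : (p %ₘ (X ^ 2 + 1)).natDegree ≤ 1 := by
    have := natDegree_modByMonic_lt p hmonic fun h => by simp [h] at hdeg
    omega
  rw [← AdjoinRoot.mk_leftInverse hmonic (AdjoinRoot.mk _ p), AdjoinRoot.modByMonicHom_mk]
  generalize p %ₘ (X ^ 2 + 1) = r at hr ⊢
  refine ⟨r.coeff 0, r.coeff 1, ?_⟩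
  conv_lhs => rw [eq_X_add_C_of_natDegree_le_one hr]
  simp [AdjoinRoot.algebraMap_eq, add_comm]

section Conj

variable {k : Type*} [Field k] [LinearOrder k] [IsStrictOrderedRing k]

@[simp]
theorem Kbar.conj_of (a : k) :
    Kbar.conj k (AdjoinRoot.of (X ^ 2 + 1 : k[X]) a) = AdjoinRoot.of _ a :=
  AdjoinRoot.lift_of _

@[simp]
theorem Kbar.conj_root : Kbar.conj k (AdjoinRoot.root (X ^ 2 + 1 : k[X])) = -AdjoinRoot.root _ :=
  AdjoinRoot.lift_root _

end Conj

theorem An_two (R : Type*) [Ring R] : An R 2 = !![0, 1; -1, 0] := by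
  ext i j
  fin_cases i <;> fin_cases j <;> simp [An]

theorem An_two_inv (R : Type*) [CommRing R] : (An R 2)⁻¹ = !![0, -1; 1, 0] :=
  Matrix.inv_eq_right_inv (by simp [An_two, Matrix.one_fin_two])

theorem An_two_mul_mul_inv {R : Type*} [CommRing R] (N : Matrix (Fin 2) (Fin 2) R) :
    An R 2 * N * (An R 2)⁻¹ = !![N 1 1, -N 1 0; -N 0 1, N 0 0] := by
  rw [An_two_inv, An_two, Matrix.eta_fin_two N]
  simp

theorem quaternionic_fixed_iff_mem_mu_range_general (k : Type*) [Field k] [LinearOrder k] [IsStrictOrderedRing k]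
    (M : Matrix (Fin 2) (Fin 2) (Kbar k)) :
    M = An (Kbar k) 2 * M.map (Kbar.conj k) * (An (Kbar k) 2)⁻¹ ↔
      ∃ h : Quaternion k, M = mu k h := by
  rw [An_two_mul_mul_inv]
  constructor
  · intro hM
    have h10 : M 1 0 = -Kbar.conj k (M 0 1) := by simpa using congrFun (congrFun hM 1) 0
    have h11 : M 1 1 = Kbar.conj k (M 0 0) := by simpa using congrFun (congrFun hM 1) 1
    obtain ⟨a, b, hab⟩ := AdjoinRoot.exists_eq_algebraMap_add_algebraMap_mul_root (M 0 0)
    obtain ⟨c, d, hcd⟩ := AdjoinRoot.exists_eq_algebraMap_add_algebraMap_mul_root (M 0 1)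
    refine ⟨⟨a, b, c, d⟩, ?_⟩
    rw [Matrix.eta_fin_two M, h10, h11, hab, hcd]
    simp [mu, add_comm, sub_eq_add_neg]
  · rintro ⟨h, rfl⟩
    simp [mu, add_comm, sub_eq_add_neg]

/-- a 2×2 matrix `M` over `k̄` satisfies `M = A₂·conj(M)·A₂⁻¹`
iff `M` lies in the image of the standard quaternion embedding `μ`. -/
theorem quaternionic_fixed_iff_mem_mu_range (k : Type*) [Field k] [LinearOrder k] [IsStrictOrderedRing k]
    (hk : IsRealClosedOld k) (M : Matrix (Fin 2) (Fin 2) (Kbar k)) :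
    M = An (Kbar k) 2 * M.map (Kbar.conj k) * (An (Kbar k) 2)⁻¹ ↔
      ∃ h : Quaternion k, M = mu k h :=
  quaternionic_fixed_iff_mem_mu_range_general k M
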